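/- If Δ₁ and Δ₂ are Jordan groups, then the product Δ₁ × Δ₂ is Jordan and its weak Jordan constant satisfies J̄(Δ₁ × Δ₂) = J̄(Δ₁) · J̄(Δ₂). -/

import Mathlib

/-- `J` is a weak Jordan bound for `Γ`: every finite subgroup contains an abelian
subgroup of index at most `J`. -/
def WeakJordanBound (Γ : Type*) [Group Γ] (J : ℕ) : Prop :=
  ∀ G : Subgroup Γ, Finite G →
    ∃ A : Subgroup Γ, A ≤ G ∧ IsMulCommutative A ∧ A.relIndex G ≤ J

/-- `J` is a Jordan bound for `Γ`: every finite subgroup contains a normal abelian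
subgroup of index at most `J`. -/
def JordanBound (Γ : Type*) [Group Γ] (J : ℕ) : Prop :=
  ∀ G : Subgroup Γ, Finite G →
    ∃ A : Subgroup Γ, A ≤ G ∧ IsMulCommutative A ∧ (A.subgroupOf G).Normal ∧ A.relIndex G ≤ J

/-- A group is Jordan if it admits some Jordan bound. -/
def JordanGroup (Γ : Type*) [Group Γ] : Prop := ∃ J, JordanBound Γ J

/-- The weak Jordan constant: the least weak Jordan bound. -/
noncomputable def weakJordanConst (Γ : Type*) [Group Γ] : ℕ :=
  sInf {J | WeakJordanBound Γ J}

/-- The Jordan constant: the least Jordan bound. -/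
noncomputable def jordanConst (Γ : Type*) [Group Γ] : ℕ :=
  sInf {J | JordanBound Γ J}

/-!
A finite subgroup `G` of `Δ₁ × Δ₂` lies in the product `G₁ × G₂` of its projections, and for
`A₁ ≤ G₁`, `A₂ ≤ G₂` abelian (and normal) the subgroup `(A₁ × A₂) ∩ G` is abelian (and normal) in
`G` of index at most `[G₁ : A₁] [G₂ : A₂]`; so bounds multiply. Conversely, an abelian `A` in a
product `G₁ × G₂` lies in the product of its projections `A₁ × A₂`, which are abelian, hence
`[G₁ × G₂ : A] ≥ [G₁ : A₁] [G₂ : A₂]`; choosing `Gᵢ` witnessing that `J̄(Δᵢ) - 1` is not a weak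
bound shows that no weak bound for the product is below `J̄(Δ₁) J̄(Δ₂)`.
-/

namespace Subgroup

variable {G N : Type*} [Group G] [Group N]

instance finite_map (H : Subgroup G) [Finite H] (f : G →* N) : Finite (H.map f) :=
  inferInstanceAs (Finite (f '' (H : Set G)))

instance finite_prod (H : Subgroup G) (K : Subgroup N) [Finite H] [Finite K] :
    Finite (H.prod K) :=
  inferInstanceAs (Finite ((H : Set G) ×ˢ (K : Set N)))

instance prod_isMulCommutative (H : Subgroup G) (K : Subgroup N) [IsMulCommutative H]
    [IsMulCommutative K] : IsMulCommutative (H.prod K) :=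
  .of_setLike_mul_comm fun _ ha _ hb ↦
    Prod.ext (setLike_mul_comm ha.1 hb.1) (setLike_mul_comm ha.2 hb.2)

lemma isMulCommutative_of_le {H K : Subgroup G} (hHK : H ≤ K) [IsMulCommutative K] :
    IsMulCommutative H :=
  .of_setLike_mul_comm fun _ ha _ hb ↦ setLike_mul_comm (hHK ha) (hHK hb)

lemma relIndex_ne_zero_of_finite (H K : Subgroup G) [Finite K] : H.relIndex K ≠ 0 :=
  (H.subgroupOf K).index_ne_zero_of_finite

lemma relIndex_prod (A₁ G₁ : Subgroup G) (A₂ G₂ : Subgroup N) :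
    (A₁.prod A₂).relIndex (G₁.prod G₂) = A₁.relIndex G₁ * A₂.relIndex G₂ := by
  have hcomap : (A₁.prod A₂).subgroupOf (G₁.prod G₂) =
      ((A₁.subgroupOf G₁).prod (A₂.subgroupOf G₂)).comap (G₁.prodEquiv G₂).toMonoidHom := by
    ext; exact Iff.rfl
  rw [relIndex, hcomap, index_comap_of_surjective _ (G₁.prodEquiv G₂).surjective, index_prod]
  rfl

lemma le_prod_map_fst_map_snd (J : Subgroup (G × N)) :
    J ≤ (J.map (MonoidHom.fst G N)).prod (J.map (MonoidHom.snd G N)) :=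
  le_prod_iff.mpr ⟨le_rfl, le_rfl⟩

end Subgroup

open Subgroup

section Bounds

variable {Γ : Type*} [Group Γ]

lemma JordanBound.weakJordanBound {J : ℕ} (h : JordanBound Γ J) : WeakJordanBound Γ J :=
  fun G hG ↦ (h G hG).imp fun _ ⟨hAG, hA, _, hAJ⟩ ↦ ⟨hAG, hA, hAJ⟩

lemma weakJordanBound_weakJordanConst (h : ∃ J, WeakJordanBound Γ J) :
    WeakJordanBound Γ (weakJordanConst Γ) :=
  Nat.sInf_mem h

variable (Γ) in
/-- If `Γ` has no weak bound then `weakJordanConst Γ = sInf ∅ = 0`, and `⊥` is a witness. -/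
lemma exists_finite_forall_weakJordanConst_le_relIndex :
    ∃ G : Subgroup Γ, Finite G ∧
      ∀ A ≤ G, IsMulCommutative A → weakJordanConst Γ ≤ A.relIndex G := by
  rcases Nat.eq_zero_or_pos (weakJordanConst Γ) with h | h
  · exact ⟨⊥, inferInstance, fun _ _ _ ↦ h ▸ Nat.zero_le _⟩
  have hnot : ¬ WeakJordanBound Γ (weakJordanConst Γ - 1) :=
    Nat.notMem_of_lt_sInf (Nat.sub_lt h Nat.one_pos)
  simp only [WeakJordanBound, not_forall, not_exists, not_and, not_le] at hnot
  obtain ⟨G, hG, hlt⟩ := hnot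
  exact ⟨G, hG, fun A hAG hA ↦ by have := hlt A hAG hA; omega⟩

end Bounds

section Prod

variable {Δ₁ Δ₂ : Type*} [Group Δ₁] [Group Δ₂]

lemma relIndex_inf_prod_le {G : Subgroup (Δ₁ × Δ₂)} [Finite G] (A₁ : Subgroup Δ₁)
    (A₂ : Subgroup Δ₂) :
    (A₁.prod A₂ ⊓ G).relIndex G ≤
      A₁.relIndex (G.map (MonoidHom.fst Δ₁ Δ₂)) * A₂.relIndex (G.map (MonoidHom.snd Δ₁ Δ₂)) := by
  rw [inf_relIndex_right, ← relIndex_prod]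
  exact relIndex_le_of_le_right (le_prod_map_fst_map_snd G) (relIndex_ne_zero_of_finite _ _)

lemma WeakJordanBound.prod {J₁ J₂ : ℕ} (b₁ : WeakJordanBound Δ₁ J₁)
    (b₂ : WeakJordanBound Δ₂ J₂) : WeakJordanBound (Δ₁ × Δ₂) (J₁ * J₂) := by
  intro G _
  obtain ⟨A₁, -, _, hA₁⟩ := b₁ (G.map (MonoidHom.fst Δ₁ Δ₂)) inferInstance
  obtain ⟨A₂, -, _, hA₂⟩ := b₂ (G.map (MonoidHom.snd Δ₁ Δ₂)) inferInstance
  exact ⟨A₁.prod A₂ ⊓ G, inf_le_right, isMulCommutative_of_le inf_le_left,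
    (relIndex_inf_prod_le A₁ A₂).trans (Nat.mul_le_mul hA₁ hA₂)⟩

lemma JordanBound.prod {J₁ J₂ : ℕ} (b₁ : JordanBound Δ₁ J₁) (b₂ : JordanBound Δ₂ J₂) :
    JordanBound (Δ₁ × Δ₂) (J₁ * J₂) := by
  intro G _
  obtain ⟨A₁, hA₁G, _, _, hA₁⟩ := b₁ (G.map (MonoidHom.fst Δ₁ Δ₂)) inferInstance
  obtain ⟨A₂, hA₂G, _, _, hA₂⟩ := b₂ (G.map (MonoidHom.snd Δ₁ Δ₂)) inferInstance
  have hnormalizer : G ≤ normalizer (A₁.prod A₂ : Set (Δ₁ × Δ₂)) :=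
    (le_prod_map_fst_map_snd G).trans
      ((normal_subgroupOf_iff_le_normalizer (prod_mono hA₁G hA₂G)).mp inferInstance)
  refine ⟨A₁.prod A₂ ⊓ G, inf_le_right, isMulCommutative_of_le inf_le_left, ?_,
    (relIndex_inf_prod_le A₁ A₂).trans (Nat.mul_le_mul hA₁ hA₂)⟩
  rw [inf_subgroupOf_right]
  exact normal_subgroupOf_of_le_normalizer hnormalizer

lemma WeakJordanBound.weakJordanConst_mul_le {K : ℕ} (hK : WeakJordanBound (Δ₁ × Δ₂) K) :
    weakJordanConst Δ₁ * weakJordanConst Δ₂ ≤ K := by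
  obtain ⟨G₁, _, hG₁⟩ := exists_finite_forall_weakJordanConst_le_relIndex Δ₁
  obtain ⟨G₂, _, hG₂⟩ := exists_finite_forall_weakJordanConst_le_relIndex Δ₂
  obtain ⟨A, hAG, _, hAK⟩ := hK (G₁.prod G₂) inferInstance
  obtain ⟨hA₁, hA₂⟩ := le_prod_iff.mp hAG
  calc weakJordanConst Δ₁ * weakJordanConst Δ₂
      ≤ (A.map (MonoidHom.fst Δ₁ Δ₂)).relIndex G₁ * (A.map (MonoidHom.snd Δ₁ Δ₂)).relIndex G₂ :=
        Nat.mul_le_mul (hG₁ _ hA₁ inferInstance) (hG₂ _ hA₂ inferInstance)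
    _ = ((A.map (MonoidHom.fst Δ₁ Δ₂)).prod (A.map (MonoidHom.snd Δ₁ Δ₂))).relIndex
          (G₁.prod G₂) := (relIndex_prod _ _ _ _).symm
    _ ≤ A.relIndex (G₁.prod G₂) :=
        relIndex_le_of_le_left (le_prod_map_fst_map_snd A) (relIndex_ne_zero_of_finite _ _)
    _ ≤ K := hAK

end Prod

theorem weakJordanConst_prod {Δ₁ Δ₂ : Type*} [Group Δ₁] [Group Δ₂]
    (h₁ : JordanGroup Δ₁) (h₂ : JordanGroup Δ₂) :
    JordanGroup (Δ₁ × Δ₂) ∧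
      weakJordanConst (Δ₁ × Δ₂) = weakJordanConst Δ₁ * weakJordanConst Δ₂ := by
  obtain ⟨J₁, hJ₁⟩ := h₁
  obtain ⟨J₂, hJ₂⟩ := h₂
  have hw₁ := weakJordanBound_weakJordanConst ⟨J₁, hJ₁.weakJordanBound⟩
  have hw₂ := weakJordanBound_weakJordanConst ⟨J₂, hJ₂.weakJordanBound⟩
  refine ⟨⟨J₁ * J₂, hJ₁.prod hJ₂⟩, le_antisymm (Nat.sInf_le (hw₁.prod hw₂)) ?_⟩
  exact (weakJordanBound_weakJordanConst ⟨_, hw₁.prod hw₂⟩).weakJordanConst_mul_le
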